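/- arXiv:2006.09064 — 5 statements merged into one kernel-verified Lean document; each statement's English description precedes it below -/
import Mathlib

section
/- Let A be a finite set and, for each α ∈ A, let Ω_α be a nonempty standard Borel space. Let ℐ be a finite family of subsets of A, and let G be its dependency graph: the simple graph on vertex set A in which α and β are adjacent whenever α ≠ β and {α, β} ⊆ I for some I ∈ ℐ. Suppose that G is chordal and that ℐ is exactly the set of maximal cliques of G. Then every locally compatible family (p_I)_{I∈ℐ}, where each p_I is a probability measure on ∏_{α∈I} Ω_α (with the product σ-algebra), admits a global extension: there exists a probability measure p on ∏_{α∈A} Ω_α such that for every I ∈ ℐ the pushforward of p under the restriction map (ω_α)_{α∈A} ↦ (ω_α)_{α∈I} equals p_I. -/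
open MeasureTheory

/-- A simple graph is chordal if every cycle of length at least 4 has a chord: an edge of
the graph joining two vertices of the cycle that is not itself an edge of the cycle. -/
def SimpleGraph.IsChordal {V : Type*} (G : SimpleGraph V) : Prop :=
  ∀ (v : V) (w : G.Walk v v), w.IsCycle → 4 ≤ w.length →
    ∃ u₁ u₂ : V, u₁ ∈ w.support ∧ u₂ ∈ w.support ∧ G.Adj u₁ u₂ ∧ s(u₁, u₂) ∉ w.edges

/-- A maximal clique: a set of pairwise adjacent vertices not properly contained in any
other set of pairwise adjacent vertices. -/
def SimpleGraph.IsMaximalClique {V : Type*} (G : SimpleGraph V) (s : Set V) : Prop :=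
  G.IsClique s ∧ ∀ t : Set V, G.IsClique t → s ⊆ t → s = t

/-!
A chordal graph has a simplicial vertex `v` (Dirac): the neighbours of `v` form a clique, so `v`
lies in exactly one maximal clique `C`. By induction on the vertex set, the remaining cliques admit
a common extension `μ'`, whose marginal on `C \ {v}` agrees with that of `p_C`. Gluing `μ'` with
the conditional law of `ω_v` given `ω_{C \ {v}}` under `p_C` (a disintegration, which exists on
standard Borel spaces) gives an extension that is correct on `C` and unchanged on every clique
avoiding `v`. The induction is run with the marginals of the family on all cliques, which are
well defined and consistent by local compatibility.
-/

open Finset Function ProbabilityTheory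

namespace SimpleGraph

variable {V : Type*} {G : SimpleGraph V}

namespace Walk

variable {T : Set V} {x y : V}

def IsShortestIn (T : Set V) (w : G.Walk x y) : Prop :=
  (∀ z ∈ w.support, z ∈ T) ∧
    ∀ w' : G.Walk x y, (∀ z ∈ w'.support, z ∈ T) → w.length ≤ w'.length

lemma exists_isShortestIn_isPath (w : G.Walk x y) (hw : ∀ z ∈ w.support, z ∈ T) :
    ∃ p : G.Walk x y, p.IsShortestIn T ∧ p.IsPath := by
  classical
  have hex : ∃ n, ∃ w : G.Walk x y, (∀ z ∈ w.support, z ∈ T) ∧ w.length = n := ⟨_, w, hw, rfl⟩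
  obtain ⟨p, hpT, hp⟩ := Nat.find_spec hex
  refine ⟨p.bypass, ⟨fun z hz => hpT z (p.support_bypass_subset_support hz), fun w' hw' => ?_⟩,
    p.bypass_isPath⟩
  exact p.length_bypass_le_length.trans (hp ▸ Nat.find_min' hex ⟨w', hw', rfl⟩)

lemma mem_edges_of_length_eq_one {u v : V} {p : G.Walk u v} (h : p.length = 1) :
    s(u, v) ∈ p.edges := by
  cases p with
  | nil => simp at h
  | cons _ q => cases q with
    | nil => simp
    | cons _ _ => simp at h

lemma IsShortestIn.mem_edges_of_eq_append {w : G.Walk x y} (hw : w.IsShortestIn T) {u u' : V}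
    (p : G.Walk x u) (m : G.Walk u u') (q : G.Walk u' y) (hpmq : w = p.append (m.append q))
    (hadj : G.Adj u u') : s(u, u') ∈ w.edges := by
  subst hpmq
  have hshortcut : ∀ z ∈ (p.append (cons hadj q)).support, z ∈ T := by
    intro z hz
    apply hw.1
    simp only [mem_support_append_iff, support_cons, List.mem_cons] at hz ⊢
    rcases hz with hz | rfl | hz
    · exact Or.inl hz
    · exact Or.inl p.end_mem_support
    · exact Or.inr (Or.inr hz)
  have hlen := hw.2 _ hshortcut
  simp only [length_append, length_cons] at hlen
  have hm : m.length = 1 := by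
    have : m.length ≠ 0 := fun h => hadj.ne (eq_of_length_eq_zero h)
    omega
  simp only [edges_append, List.mem_append]
  exact Or.inr (Or.inl (mem_edges_of_length_eq_one hm))

lemma IsShortestIn.mem_edges_of_adj {w : G.Walk x y} (hw : w.IsShortestIn T) {u₁ u₂ : V}
    (h₁ : u₁ ∈ w.support) (h₂ : u₂ ∈ w.support) (hadj : G.Adj u₁ u₂) : s(u₁, u₂) ∈ w.edges := by
  classical
  have hw₁ := w.take_spec h₁
  rcases (mem_support_append_iff _ _).mp (hw₁ ▸ h₂ : u₂ ∈ _) with h₂ | h₂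
  · rw [Sym2.eq_swap]
    refine hw.mem_edges_of_eq_append ((w.takeUntil u₁ h₁).takeUntil u₂ h₂)
      ((w.takeUntil u₁ h₁).dropUntil u₂ h₂) (w.dropUntil u₁ h₁) ?_ hadj.symm
    rw [append_assoc, (w.takeUntil u₁ h₁).take_spec h₂, hw₁]
  · refine hw.mem_edges_of_eq_append (w.takeUntil u₁ h₁) ((w.dropUntil u₁ h₁).takeUntil u₂ h₂)
      ((w.dropUntil u₁ h₁).dropUntil u₂ h₂) ?_ hadj
    rw [(w.dropUntil u₁ h₁).take_spec h₂, hw₁]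

end Walk

/-- A shortest walk from `x` to `y` avoiding the closed neighbourhood of `a` closes, through `a`,
a cycle of length at least 4 whose only possible chords would be chords of that walk. -/
theorem IsChordal.adj_of_walk_avoiding {a x y : V} (hG : G.IsChordal) (hax : G.Adj a x)
    (hay : G.Adj a y) (hxy : x ≠ y) (w : G.Walk x y)
    (hw : ∀ z ∈ w.support, z = x ∨ z = y ∨ (z ≠ a ∧ ¬ G.Adj a z)) : G.Adj x y := by
  by_contra hnxy
  obtain ⟨p, hp, hpath⟩ := w.exists_isShortestIn_isPath hw
  have hap : a ∉ p.support := fun ha => by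
    rcases hp.1 a ha with rfl | rfl | h
    exacts [hax.ne rfl, hay.ne rfl, h.1 rfl]
  have hlen : 2 ≤ p.length := by
    have h0 : p.length ≠ 0 := fun h => hxy (Walk.eq_of_length_eq_zero h)
    have h1 : p.length ≠ 1 := fun h => hnxy (Walk.adj_of_length_eq_one h)
    omega
  set c : G.Walk a a := Walk.cons hax (p.concat hay.symm)
  have hc : c.IsCycle := by
    refine (Walk.cons_isCycle_iff _ _).mpr ⟨hpath.concat hap hay.symm, fun h => ?_⟩
    simp only [Walk.edges_concat, List.concat_eq_append, List.mem_append, List.mem_singleton] at h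
    rcases h with h | h
    · exact hap (p.fst_mem_support_of_mem_edges h)
    · rcases Sym2.eq_iff.mp h with ⟨rfl, -⟩ | ⟨-, rfl⟩
      exacts [hay.ne rfl, hxy rfl]
  obtain ⟨u₁, u₂, h₁, h₂, hadj, hchord⟩ := hG a c hc (by simp [c]; omega)
  have hsupp : ∀ u ∈ c.support, u = a ∨ u ∈ p.support := by
    simp only [c, Walk.support_cons, Walk.support_concat, List.mem_cons, List.mem_append]
    tauto
  have hspoke : ∀ u ∈ p.support, G.Adj a u → s(a, u) ∈ c.edges := by
    intro u hu hau
    rcases hp.1 u hu with rfl | rfl | h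
    · simp [c]
    · simp [c, Sym2.eq_swap]
    · exact absurd hau h.2
  apply hchord
  rcases hsupp u₁ h₁ with rfl | hp₁ <;> rcases hsupp u₂ h₂ with rfl | hp₂
  · exact absurd rfl hadj.ne
  · exact hspoke u₂ hp₂ hadj
  · rw [Sym2.eq_swap]
    exact hspoke u₁ hp₁ hadj.symm
  · have := hp.mem_edges_of_adj hp₁ hp₂ hadj
    simp [c, this]

def componentIn (G : SimpleGraph V) (t : Set V) (b : V) : Set V :=
  {z | ∃ w : G.Walk b z, ∀ u ∈ w.support, u ∈ t}

section componentIn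

variable {t : Set V} {b : V}

lemma componentIn_subset : G.componentIn t b ⊆ t :=
  fun z ⟨w, hw⟩ => hw z w.end_mem_support

lemma mem_componentIn_self (hb : b ∈ t) : b ∈ G.componentIn t b := by
  refine ⟨Walk.nil, ?_⟩
  simpa using hb

lemma mem_componentIn_of_adj {z w : V} (hz : z ∈ G.componentIn t b) (hzw : G.Adj z w)
    (hw : w ∈ t) : w ∈ G.componentIn t b := by
  obtain ⟨p, hp⟩ := hz
  refine ⟨p.concat hzw, fun u hu => ?_⟩
  rw [Walk.support_concat, List.mem_append, List.mem_singleton] at hu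
  rcases hu with hu | rfl
  exacts [hp u hu, hw]

lemma exists_walk_of_mem_componentIn {z₁ z₂ : V} (h₁ : z₁ ∈ G.componentIn t b)
    (h₂ : z₂ ∈ G.componentIn t b) : ∃ w : G.Walk z₁ z₂, ∀ u ∈ w.support, u ∈ t := by
  obtain ⟨p₁, hp₁⟩ := h₁
  obtain ⟨p₂, hp₂⟩ := h₂
  refine ⟨p₁.reverse.append p₂, fun u hu => ?_⟩
  rw [Walk.mem_support_append_iff, Walk.support_reverse, List.mem_reverse] at hu
  rcases hu with hu | hu
  exacts [hp₁ u hu, hp₂ u hu]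

end componentIn

def IsSimplicial (G : SimpleGraph V) (s : Set V) (v : V) : Prop :=
  v ∈ s ∧ G.IsClique (s ∩ G.neighborSet v)

lemma IsSimplicial.of_subset {s s' : Set V} {v : V} (hv : G.IsSimplicial s' v) (hs' : s' ⊆ s)
    (hnb : s ∩ G.neighborSet v ⊆ s') : G.IsSimplicial s v :=
  ⟨hs' hv.1, hv.2.subset fun z hz => (⟨hnb hz, hz.2⟩ : z ∈ s' ∩ G.neighborSet v)⟩

theorem IsChordal.isClique_adj_componentIn (hG : G.IsChordal) {a b : V} {t : Set V}
    (ht : ∀ z ∈ t, z ≠ a ∧ ¬ G.Adj a z) :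
    G.IsClique {x | G.Adj a x ∧ ∃ z ∈ G.componentIn t b, G.Adj x z} := by
  rintro x ⟨hax, zx, hzx, hxzx⟩ y ⟨hay, zy, hzy, hyzy⟩ hxy
  obtain ⟨q, hq⟩ := exists_walk_of_mem_componentIn hzx hzy
  refine hG.adj_of_walk_avoiding hax hay hxy (Walk.cons hxzx (q.concat hyzy.symm)) fun z hz => ?_
  simp only [Walk.support_cons, Walk.support_concat, List.mem_cons, List.mem_append,
    List.not_mem_nil, or_false] at hz
  rcases hz with rfl | hz | rfl
  exacts [Or.inl rfl, Or.inr (Or.inr (ht z (hq z hz))), Or.inr (Or.inl rfl)]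

/-- The neighbours of `a` adjacent to the component `C` of `b` outside the closed neighbourhood of
`a` form a clique `S`, so a simplicial vertex of the smaller set `C ∪ S` can be found in `C`, where
it stays simplicial in `s`. -/
theorem IsChordal.exists_isSimplicial_not_adj (hG : G.IsChordal) {s : Finset V}
    (ih : ∀ s' ⊂ s, G.IsClique (s' : Set V) ∨
      ∃ v w, v ≠ w ∧ ¬ G.Adj v w ∧ G.IsSimplicial s' v ∧ G.IsSimplicial s' w)
    {a b : V} (ha : a ∈ s) (hb : b ∈ s) (hab : a ≠ b) (hnab : ¬ G.Adj a b) :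
    ∃ v, v ≠ a ∧ ¬ G.Adj a v ∧ G.IsSimplicial s v := by
  classical
  set t : Set V := {z | z ∈ s ∧ z ≠ a ∧ ¬ G.Adj a z}
  set C := G.componentIn t b
  set S : Set V := {x | x ∈ s ∧ G.Adj a x ∧ ∃ z ∈ C, G.Adj x z}
  have hCt : C ⊆ t := componentIn_subset
  have hbC : b ∈ C := mem_componentIn_self ⟨hb, hab.symm, hnab⟩
  have hS : G.IsClique S :=
    (hG.isClique_adj_componentIn fun z hz => hz.2).subset fun x hx => hx.2
  set s' := s.filter (fun z => z ∈ C ∨ z ∈ S)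
  have hs' : s' ⊂ s := by
    refine filter_ssubset.mpr ⟨a, ha, ?_⟩
    rintro (h | h)
    exacts [(hCt h).2.1 rfl, h.2.1.ne rfl]
  have hnb : ∀ v ∈ C, ↑s ∩ G.neighborSet v ⊆ ↑s' := by
    intro v hv w ⟨hws, hvw⟩
    simp only [s', coe_filter, Set.mem_ofPred_eq]
    refine ⟨hws, ?_⟩
    by_cases haw : G.Adj a w
    · exact Or.inr ⟨hws, haw, v, hv, hvw.symm⟩
    · refine Or.inl (mem_componentIn_of_adj hv hvw ⟨hws, ?_, haw⟩)
      rintro rfl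
      exact (hCt hv).2.2 hvw.symm
  obtain ⟨v, hvC, hv⟩ : ∃ v ∈ C, G.IsSimplicial s' v := by
    rcases ih s' hs' with hcl | ⟨v, w, hvw, hnvw, hv, hw⟩
    · exact ⟨b, hbC, by simp [s', hb, hbC], hcl.subset Set.inter_subset_left⟩
    · rcases (mem_filter.mp hv.1).2 with hvC | hvS
      · exact ⟨v, hvC, hv⟩
      rcases (mem_filter.mp hw.1).2 with hwC | hwS
      · exact ⟨w, hwC, hw⟩
      exact absurd (hS hvS hwS hvw) hnvw
  exact ⟨v, (hCt hvC).2.1, (hCt hvC).2.2,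
    hv.of_subset (coe_subset.mpr (filter_subset _ _)) (hnb v hvC)⟩

theorem IsChordal.isClique_or_exists_isSimplicial (hG : G.IsChordal) (s : Finset V) :
    G.IsClique (s : Set V) ∨
      ∃ v w, v ≠ w ∧ ¬ G.Adj v w ∧ G.IsSimplicial s v ∧ G.IsSimplicial s w := by
  induction s using Finset.strongInduction with
  | H s ih =>
  by_cases hcl : G.IsClique (s : Set V)
  · exact Or.inl hcl
  obtain ⟨a, ha, b, hb, hab, hnab⟩ : ∃ a ∈ s, ∃ b ∈ s, a ≠ b ∧ ¬ G.Adj a b := by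
    simpa [IsClique, Set.Pairwise] using hcl
  obtain ⟨v, hva, hnav, hv⟩ := hG.exists_isSimplicial_not_adj ih ha hb hab hnab
  obtain ⟨w, hwv, hnvw, hw⟩ :=
    hG.exists_isSimplicial_not_adj ih hv.1 ha hva (fun h => hnav h.symm)
  exact Or.inr ⟨v, w, hwv.symm, hnvw, hv, hw⟩

theorem IsChordal.exists_isSimplicial (hG : G.IsChordal) {s : Finset V} (hs : s.Nonempty) :
    ∃ v, G.IsSimplicial s v := by
  rcases hG.isClique_or_exists_isSimplicial s with hcl | ⟨v, -, -, -, hv, -⟩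
  · obtain ⟨v, hv⟩ := hs
    exact ⟨v, hv, hcl.subset Set.inter_subset_left⟩
  · exact ⟨v, hv⟩

lemma exists_isMaximalClique_superset [Finite V] (G : SimpleGraph V) {s : Set V}
    (hs : G.IsClique s) : ∃ t, G.IsMaximalClique t ∧ s ⊆ t := by
  obtain ⟨t, hst, ht⟩ := Finite.exists_le_maximal (p := fun t : Set V => G.IsClique t ∧ s ⊆ t)
    ⟨hs, subset_rfl⟩
  exact ⟨t, ⟨ht.prop.1, fun u hu htu => le_antisymm htu (ht.2 ⟨hu, hst.trans htu⟩ htu)⟩, hst⟩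

end SimpleGraph

lemma MeasureTheory.Measure.map_prodMap_compProd_comap {X Y Z : Type*} [MeasurableSpace X]
    [MeasurableSpace Y] [MeasurableSpace Z] (μ : Measure X) [SFinite μ] {f : X → Y}
    (hf : Measurable f) (κ : Kernel Y Z) [IsSFiniteKernel κ] :
    (μ ⊗ₘ κ.comap f hf).map (Prod.map f id) = μ.map f ⊗ₘ κ := by
  ext s hs
  rw [Measure.map_apply (hf.prodMap measurable_id) hs,
    Measure.compProd_apply (hs.preimage (hf.prodMap measurable_id)), Measure.compProd_apply hs,
    lintegral_map (Kernel.measurable_kernel_prodMk_left hs) hf]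
  rfl

section Marginals

variable {A : Type*} {Ω : A → Type*} [∀ α, MeasurableSpace (Ω α)]

lemma map_restrict_eq_map_restrict₂ (μ : Measure (∀ α, Ω α)) {J K : Finset A} (h : J ⊆ K) :
    μ.map J.restrict = (μ.map K.restrict).map (restrict₂ h) := by
  rw [Measure.map_map (measurable_restrict₂ h) (measurable_restrict K), restrict₂_comp_restrict]

lemma map_restrict₂_map_restrict₂ {I J K : Finset A} (ν : Measure (∀ α : I, Ω α)) (hJK : J ⊆ K)
    (hKI : K ⊆ I) :
    (ν.map (restrict₂ hKI)).map (restrict₂ hJK) = ν.map (restrict₂ (hJK.trans hKI)) := by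
  rw [Measure.map_map (measurable_restrict₂ hJK) (measurable_restrict₂ hKI),
    restrict₂_comp_restrict₂]

lemma MeasurableEquiv.fst_comp_piFinsetUnion_symm [DecidableEq A] {S T : Finset A}
    (hST : Disjoint S T) :
    Prod.fst ∘ (MeasurableEquiv.piFinsetUnion Ω hST).symm = restrict₂ subset_union_left := by
  funext z
  conv_rhs => rw [← (MeasurableEquiv.piFinsetUnion Ω hST).apply_symm_apply z]
  funext i
  exact (Equiv.piFinsetUnion_left Ω hST i.2 _).symm

lemma restrict_comp_updateFinset [DecidableEq A] {S T : Finset A} (hST : Disjoint S T) :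
    (S ∪ T).restrict ∘ (fun p : (∀ α, Ω α) × (∀ α : T, Ω α) => updateFinset p.1 T p.2) =
      MeasurableEquiv.piFinsetUnion Ω hST ∘ Prod.map S.restrict id := by
  funext p
  funext i
  by_cases hi : i.1 ∈ T
  · simp only [comp_apply, restrict, updateFinset, hi, dite_true]
    exact (Equiv.piFinsetUnion_right Ω hST hi i.2).symm
  · have hiS : i.1 ∈ S := (mem_union.mp i.2).resolve_right hi
    simp only [comp_apply, restrict, updateFinset, hi, dite_false]
    exact (Equiv.piFinsetUnion_left Ω hST (f := S.restrict p.1) hiS i.2).symm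

/-- Gluing along `S`: the coordinates in `T` are resampled from the conditional law under `ρ`
given the coordinates in `S`. -/
theorem exists_gluing [DecidableEq A] {S T : Finset A} (hST : Disjoint S T)
    [∀ α : T, StandardBorelSpace (Ω α)] [∀ α : T, Nonempty (Ω α)]
    (μ : Measure (∀ α, Ω α)) [IsProbabilityMeasure μ]
    (ρ : Measure (∀ α : (S ∪ T : Finset A), Ω α)) [IsProbabilityMeasure ρ]
    (h : ρ.map (restrict₂ subset_union_left) = μ.map S.restrict) :
    ∃ ν : Measure (∀ α, Ω α), IsProbabilityMeasure ν ∧ ν.map (S ∪ T).restrict = ρ ∧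
      ∀ K : Finset A, Disjoint K T → ν.map K.restrict = μ.map K.restrict := by
  set e := MeasurableEquiv.piFinsetUnion Ω hST
  set ρ' := ρ.map e.symm
  have hρ' : ρ'.fst = μ.map S.restrict := by
    rw [Measure.fst, Measure.map_map measurable_fst e.symm.measurable,
      MeasurableEquiv.fst_comp_piFinsetUnion_symm, h]
  have hglue : Measurable (fun p : (∀ α, Ω α) × (∀ α : T, Ω α) => updateFinset p.1 T p.2) :=
    measurable_updateFinset'
  set ξ := μ ⊗ₘ ρ'.condKernel.comap S.restrict (Finset.measurable_restrict S)
  refine ⟨ξ.map fun p => updateFinset p.1 T p.2,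
    Measure.isProbabilityMeasure_map hglue.aemeasurable, ?_, ?_⟩
  · rw [Measure.map_map (Finset.measurable_restrict _) hglue, restrict_comp_updateFinset hST,
      ← Measure.map_map e.measurable ((Finset.measurable_restrict S).prodMap measurable_id),
      Measure.map_prodMap_compProd_comap, ← hρ', ρ'.disintegrate,
      Measure.map_map e.measurable e.symm.measurable]
    simp
  · intro K hK
    have : K.restrict ∘ (fun p : (∀ α, Ω α) × (∀ α : T, Ω α) => updateFinset p.1 T p.2) =
        K.restrict ∘ Prod.fst := by
      funext p i
      simp [updateFinset, disjoint_left.mp hK i.2]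
    rw [Measure.map_map (Finset.measurable_restrict _) hglue, this,
      ← Measure.map_map (Finset.measurable_restrict _) measurable_fst, ← Measure.fst,
      Measure.fst_compProd]

theorem SimpleGraph.IsChordal.exists_map_restrict_eq {G : SimpleGraph A} (hG : G.IsChordal)
    [∀ α, StandardBorelSpace (Ω α)] [∀ α, Nonempty (Ω α)]
    (P : ∀ K : Finset A, Measure (∀ α : K, Ω α))
    (hP : ∀ K : Finset A, G.IsClique (K : Set A) → IsProbabilityMeasure (P K))
    (hproj : ∀ K : Finset A, G.IsClique (K : Set A) → ∀ J (hJK : J ⊆ K),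
      (P K).map (restrict₂ hJK) = P J)
    (U : Finset A) :
    ∃ μ : Measure (∀ α, Ω α), IsProbabilityMeasure μ ∧
      ∀ K ⊆ U, G.IsClique (K : Set A) → μ.map K.restrict = P K := by
  classical
  induction U using Finset.strongInduction with
  | H U ih =>
  rcases U.eq_empty_or_nonempty with rfl | hU
  · have := hP ∅ (by simp)
    let x₀ : ∀ α, Ω α := fun α => Classical.arbitrary _
    refine ⟨(P ∅).map fun _ => x₀, Measure.isProbabilityMeasure_map aemeasurable_const, ?_⟩
    intro K hK _
    obtain rfl := subset_empty.mp hK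
    have : (∅ : Finset A).restrict ∘ (fun _ => x₀) = @id (∀ α : (∅ : Finset A), Ω α) := by
      funext f i
      exact absurd i.2 (notMem_empty _)
    rw [Measure.map_map (measurable_restrict _) measurable_const, this, Measure.map_id]
  obtain ⟨v, hvU, hvcl⟩ := hG.exists_isSimplicial hU
  set S := U.filter (G.Adj v)
  have hSv : Disjoint S {v} :=
    disjoint_singleton_right.mpr fun h => G.irrefl (mem_filter.mp h).2
  have hC : G.IsClique ((S ∪ {v} : Finset A) : Set A) := by
    rw [coe_union, coe_singleton, Set.union_singleton, isClique_insert]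
    exact ⟨hvcl.subset fun w hw => mem_filter.mp hw, fun w hw _ => (mem_filter.mp hw).2⟩
  have hSU : S ⊆ U.erase v := fun w hw =>
    mem_erase.mpr ⟨(G.ne_of_adj (mem_filter.mp hw).2).symm, (mem_filter.mp hw).1⟩
  obtain ⟨μ, hμ, hμP⟩ := ih (U.erase v) (erase_ssubset hvU)
  have := hP _ hC
  obtain ⟨ν, hν, hνC, hνK⟩ := exists_gluing hSv μ (P (S ∪ {v})) (by
    rw [hproj _ hC S subset_union_left, hμP S hSU (hC.subset (by simp))])
  refine ⟨ν, hν, fun K hKU hK => ?_⟩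
  by_cases hvK : v ∈ K
  · have hKC : K ⊆ S ∪ {v} := by
      intro w hw
      by_cases hwv : w = v
      · simp [hwv]
      · exact mem_union_left _ (mem_filter.mpr ⟨hKU hw, hK hvK hw (Ne.symm hwv)⟩)
    rw [map_restrict_eq_map_restrict₂ ν hKC, hνC, hproj _ hC K hKC]
  · rw [hνK K (disjoint_singleton_right.mpr hvK),
      hμP K (fun w hw => mem_erase.mpr ⟨fun h => hvK (h ▸ hw), hKU hw⟩) hK]

def IsLocallyCompatible [DecidableEq A] (ℐ : Finset (Finset A))
    (p : ∀ I : Finset A, Measure (∀ α : I, Ω α)) : Prop :=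
  ∀ I ∈ ℐ, ∀ J ∈ ℐ,
    (p I).map (restrict₂ inter_subset_left) = (p J).map (restrict₂ inter_subset_right)

/-- The marginal on `K` read off an arbitrarily chosen member of `ℐ` containing `K` (and `0` if
there is none); for a locally compatible family the choice does not matter. -/
noncomputable def marginalOn (ℐ : Finset (Finset A)) (p : ∀ I : Finset A, Measure (∀ α : I, Ω α))
    (K : Finset A) : Measure (∀ α : K, Ω α) :=
  open Classical in if h : ∃ I ∈ ℐ, K ⊆ I then (p h.choose).map (restrict₂ h.choose_spec.2) else 0

namespace IsLocallyCompatible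

variable [DecidableEq A] {ℐ : Finset (Finset A)} {p : ∀ I : Finset A, Measure (∀ α : I, Ω α)}

lemma map_restrict₂_eq (h : IsLocallyCompatible ℐ p) {I J K : Finset A} (hI : I ∈ ℐ)
    (hJ : J ∈ ℐ) (hKI : K ⊆ I) (hKJ : K ⊆ J) :
    (p I).map (restrict₂ hKI) = (p J).map (restrict₂ hKJ) := by
  have hK : K ⊆ I ∩ J := subset_inter hKI hKJ
  rw [← map_restrict₂_map_restrict₂ (p I) hK inter_subset_left, h I hI J hJ,
    map_restrict₂_map_restrict₂]

lemma marginalOn_eq (h : IsLocallyCompatible ℐ p) {I K : Finset A} (hI : I ∈ ℐ) (hKI : K ⊆ I) :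
    marginalOn ℐ p K = (p I).map (restrict₂ hKI) := by
  have hex : ∃ I ∈ ℐ, K ⊆ I := ⟨I, hI, hKI⟩
  rw [marginalOn, dif_pos hex]
  exact h.map_restrict₂_eq hex.choose_spec.1 hI _ _

end IsLocallyCompatible

end Marginals

theorem stmt0_general {A : Type*} [Fintype A] [DecidableEq A]
    (Ω : A → Type*) [∀ α, MeasurableSpace (Ω α)] [∀ α, StandardBorelSpace (Ω α)]
    [∀ α, Nonempty (Ω α)]
    (ℐ : Finset (Finset A))
    (G : SimpleGraph A)
    (hchordal : G.IsChordal)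
    (hcliques : ∀ I : Finset A, I ∈ ℐ ↔ G.IsMaximalClique (I : Set A))
    (p : ∀ I : Finset A, Measure (∀ α : I, Ω α))
    (hprob : ∀ I ∈ ℐ, IsProbabilityMeasure (p I))
    (hcompat : ∀ I ∈ ℐ, ∀ J ∈ ℐ,
      (p I).map (fun f (α : (I ∩ J : Finset A)) =>
        f ⟨α.1, Finset.inter_subset_left α.2⟩) =
      (p J).map (fun f (α : (I ∩ J : Finset A)) =>
        f ⟨α.1, Finset.inter_subset_right α.2⟩)) :
    ∃ μ : Measure (∀ α : A, Ω α), IsProbabilityMeasure μ ∧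
      ∀ I ∈ ℐ, μ.map (fun f (α : I) => f α.1) = p I := by
  have hcover : ∀ K : Finset A, G.IsClique (K : Set A) → ∃ I ∈ ℐ, K ⊆ I := by
    intro K hK
    obtain ⟨t, ht, hKt⟩ := G.exists_isMaximalClique_superset hK
    have htI := (Set.toFinite t).coe_toFinset
    exact ⟨_, (hcliques _).mpr (htI ▸ ht), fun α hα => by simpa using hKt hα⟩
  have hloc : IsLocallyCompatible ℐ p := hcompat
  obtain ⟨μ, hμ, hμP⟩ := hchordal.exists_map_restrict_eq (marginalOn ℐ p)
    (fun K hK => by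
      obtain ⟨I, hI, hKI⟩ := hcover K hK
      have := hprob I hI
      rw [hloc.marginalOn_eq hI hKI]
      exact Measure.isProbabilityMeasure_map (measurable_restrict₂ hKI).aemeasurable)
    (fun K hK J hJK => by
      obtain ⟨I, hI, hKI⟩ := hcover K hK
      rw [hloc.marginalOn_eq hI hKI, hloc.marginalOn_eq hI (hJK.trans hKI),
        map_restrict₂_map_restrict₂])
    univ
  refine ⟨μ, hμ, fun I hI => ?_⟩
  rw [← Finset.restrict_def, hμP I (subset_univ I) ((hcliques I).mp hI).1,
    hloc.marginalOn_eq hI subset_rfl]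
  exact Measure.map_id

/-- Proposition 2: if the dependency graph of the marginal scenario `ℐ` is chordal and
the elements of `ℐ` are exactly its maximal cliques, then every locally compatible family
of probability measures `(p_I)_{I ∈ ℐ}` on the corresponding products of nonempty
standard Borel spaces admits a global extension. -/
theorem stmt0 {A : Type*} [Fintype A] [DecidableEq A]
    (Ω : A → Type*) [∀ α, MeasurableSpace (Ω α)] [∀ α, StandardBorelSpace (Ω α)]
    [∀ α, Nonempty (Ω α)]
    (ℐ : Finset (Finset A))
    (G : SimpleGraph A)
    (hG : ∀ α β : A, G.Adj α β ↔ α ≠ β ∧ ∃ I ∈ ℐ, α ∈ I ∧ β ∈ I)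
    (hchordal : G.IsChordal)
    (hcliques : ∀ I : Finset A, I ∈ ℐ ↔ G.IsMaximalClique (I : Set A))
    (p : ∀ I : Finset A, Measure (∀ α : I, Ω α))
    (hprob : ∀ I ∈ ℐ, IsProbabilityMeasure (p I))
    (hcompat : ∀ I ∈ ℐ, ∀ J ∈ ℐ,
      (p I).map (fun f (α : (I ∩ J : Finset A)) =>
        f ⟨α.1, Finset.inter_subset_left α.2⟩) =
      (p J).map (fun f (α : (I ∩ J : Finset A)) =>
        f ⟨α.1, Finset.inter_subset_right α.2⟩)) :
    ∃ μ : Measure (∀ α : A, Ω α), IsProbabilityMeasure μ ∧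
      ∀ I ∈ ℐ, μ.map (fun f (α : I) => f α.1) = p I :=
  stmt0_general Ω ℐ G hchordal hcliques p hprob hcompat
end

section
/- Let n ≥ 2, let S_1, …, S_n be nonempty finite sets, and for each j ∈ {1, …, n−1} let p_j be a probability distribution on S_j × S_{j+1}. Suppose the family is locally compatible, i.e., for each j ∈ {1, …, n−2} the marginal of p_j on its second coordinate equals the marginal of p_{j+1} on its first coordinate. Then there exists a probability distribution P on S_1 × S_2 × ⋯ × S_n such that for every j ∈ {1, …, n−1} the marginal of P on the coordinates (j, j+1) equals p_j. -/
/-!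
Build the Markov chain one site at a time. A distribution `P` on the first `m + 1` sites whose
marginal at site `m` is the first marginal `r` of `p m` is extended by the conditional law
`p m a · / r a` of the next site given the current one. The new two-site marginal is then `p m`,
the old ones are untouched, and local compatibility says that the marginal at the new last site
is the first marginal of `p (m + 1)`, so the construction can continue.
-/

open Finset

section Glue

variable {α β γ : Type*} [Fintype γ]

/-- Where the row sum `∑ c, p b c` vanishes the division returns `0`; this is harmless because
the fibre of `P` over such `b` is null. -/
noncomputable def glue (P : α → ℝ) (π : α → β) (p : β → γ → ℝ) (x : α) (c : γ) : ℝ :=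
  P x * p (π x) c / ∑ c', p (π x) c'

variable {P : α → ℝ} {π : α → β} {p : β → γ → ℝ}

theorem glue_nonneg (hP : ∀ x, 0 ≤ P x) (hp : ∀ b c, 0 ≤ p b c) (x : α) (c : γ) :
    0 ≤ glue P π p x c :=
  div_nonneg (mul_nonneg (hP x) (hp _ c)) (sum_nonneg fun c' _ => hp _ c')

variable [Fintype α] [DecidableEq β]

theorem sum_glue (hP : ∀ x, 0 ≤ P x)
    (hmarg : ∀ b, ∑ x ∈ univ.filter (fun x => π x = b), P x = ∑ c, p b c) (x : α) :
    ∑ c, glue P π p x c = P x := by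
  simp only [glue, ← sum_div, ← mul_sum]
  by_cases hr : ∑ c, p (π x) c = 0
  · have hPx : P x = 0 := by
      rw [← hmarg, sum_eq_zero_iff_of_nonneg fun y _ => hP y] at hr
      exact hr x (by simp)
    simp [hPx]
  · exact mul_div_cancel_right₀ _ hr

theorem sum_filter_glue (hp : ∀ b c, 0 ≤ p b c)
    (hmarg : ∀ b, ∑ x ∈ univ.filter (fun x => π x = b), P x = ∑ c, p b c) (b : β) (c : γ) :
    ∑ x ∈ univ.filter (fun x => π x = b), glue P π p x c = p b c := by
  have hfib : ∀ x ∈ univ.filter (fun x => π x = b),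
      glue P π p x c = P x * (p b c / ∑ c', p b c') := by
    intro x hx
    rw [glue, (mem_filter.1 hx).2, mul_div_assoc]
  rw [sum_congr rfl hfib, ← sum_mul, hmarg]
  by_cases hr : ∑ c', p b c' = 0
  · rw [(sum_eq_zero_iff_of_nonneg fun c' _ => hp b c').1 hr c (mem_univ c)]
    simp [hr]
  · exact mul_div_cancel₀ _ hr

end Glue

theorem sum_pi_fin_succ_eq_sum_snoc {M : Type*} [AddCommMonoid M] {S : ℕ → Type*}
    [∀ j, Fintype (S j)] {k : ℕ} (F : (∀ i : Fin (k + 1), S i) → M) :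
    ∑ f, F f = ∑ g : ∀ i : Fin k, S i, ∑ c : S k,
      F (Fin.snoc (α := fun i : Fin (k + 1) => S i) g c) := by
  rw [← (Fin.snocEquiv fun i : Fin (k + 1) => S i).sum_comp, Fintype.sum_prod_type, sum_comm]
  rfl

section Chain

variable {S : ℕ → Type*} [∀ j, Fintype (S j)] [∀ j, DecidableEq (S j)]

def HasPairMarginals {n : ℕ} (P : (∀ i : Fin n, S i) → ℝ) (p : ∀ j : ℕ, S j → S (j + 1) → ℝ) :
    Prop :=
  ∀ j, ∀ h : j + 1 < n, ∀ (a : S j) (b : S (j + 1)),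
    ∑ f ∈ univ.filter
        (fun f : ∀ i : Fin n, S i => f ⟨j, j.lt_of_succ_lt h⟩ = a ∧ f ⟨j + 1, h⟩ = b), P f
      = p j a b

theorem HasPairMarginals.sum_filter_eq {n : ℕ} {P : (∀ i : Fin n, S i) → ℝ}
    {p : ∀ j : ℕ, S j → S (j + 1) → ℝ} (hP : HasPairMarginals P p) (j : ℕ) (h : j + 1 < n)
    (b : S (j + 1)) :
    ∑ f ∈ univ.filter (fun f : ∀ i : Fin n, S i => f ⟨j + 1, h⟩ = b), P f = ∑ a, p j a b := by
  rw [← sum_fiberwise _ (fun f : ∀ i : Fin n, S i => f ⟨j, j.lt_of_succ_lt h⟩)]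
  refine sum_congr rfl fun a _ => ?_
  rw [filter_filter, ← hP j h a b]
  exact sum_congr (filter_congr fun f _ => and_comm) fun _ _ => rfl

theorem HasPairMarginals.exists_snoc {k : ℕ} {P : (∀ i : Fin (k + 1), S i) → ℝ}
    {p : ∀ j : ℕ, S j → S (j + 1) → ℝ} (hP : HasPairMarginals P p) (hP0 : ∀ f, 0 ≤ P f)
    (hp0 : ∀ a b, 0 ≤ p k a b)
    (hlast : ∀ a, ∑ f ∈ univ.filter (fun f : ∀ i : Fin (k + 1), S i => f (Fin.last k) = a), P f
      = ∑ b, p k a b) :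
    ∃ Q : (∀ i : Fin (k + 2), S i) → ℝ,
      HasPairMarginals Q p ∧ (∀ f, 0 ≤ Q f) ∧ ∑ f, Q f = ∑ f, P f := by
  set Q : (∀ i : Fin (k + 2), S i) → ℝ := fun f =>
    glue P (fun g => g (Fin.last k)) (p k) (Fin.init f) (f (Fin.last (k + 1)))
  have hinit : ∀ (A : (∀ i : Fin (k + 1), S i) → Prop) [DecidablePred A],
      ∑ f ∈ univ.filter (fun f => A (Fin.init f)), Q f = ∑ g ∈ univ.filter A, P g := by
    intro A _
    simp only [sum_filter, sum_pi_fin_succ_eq_sum_snoc, Q,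
      Fin.init_snoc, Fin.snoc_last, sum_ite_irrel, sum_const_zero, sum_glue hP0 hlast]
  refine ⟨Q, fun j h a b => ?_, fun f => glue_nonneg hP0 hp0 _ _, ?_⟩
  · rcases Nat.lt_succ_iff_lt_or_eq.1 h with hj | hj
    · exact (hinit fun g => g ⟨j, j.lt_of_succ_lt hj⟩ = a ∧ g ⟨j + 1, hj⟩ = b).trans (hP j hj a b)
    · obtain rfl : k = j := by omega
      change ∑ f ∈ univ.filter (fun f => Fin.init f (Fin.last k) = a ∧ f (Fin.last (k + 1)) = b),
        Q f = _
      rw [sum_filter, sum_pi_fin_succ_eq_sum_snoc]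
      simp only [Q, Fin.init_snoc, Fin.snoc_last, ite_and, sum_ite_irrel, sum_const_zero,
        Fintype.sum_ite_eq']
      rw [← sum_filter]
      exact sum_filter_glue hp0 hlast a b
  · simpa using hinit fun _ => True

theorem exists_prefix_hasPairMarginals {n : ℕ} (p : ∀ j : ℕ, S j → S (j + 1) → ℝ)
    (hpos : ∀ j, j + 1 < n → ∀ a b, 0 ≤ p j a b)
    (hcompat : ∀ j, j + 2 < n → ∀ b : S (j + 1), ∑ a, p j a b = ∑ c, p (j + 1) b c) :
    ∀ m, m + 1 < n → ∃ P : (∀ i : Fin (m + 1), S i) → ℝ,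
      HasPairMarginals P p ∧ (∀ f, 0 ≤ P f) ∧
      ∀ a, ∑ f ∈ univ.filter (fun f : ∀ i : Fin (m + 1), S i => f (Fin.last m) = a), P f
        = ∑ b, p m a b
  | 0, hn => by
    refine ⟨fun f => ∑ b, p 0 (f (Fin.last 0)) b, fun j h => absurd h (by omega),
      fun f => sum_nonneg fun b _ => hpos 0 hn _ b, fun a => ?_⟩
    rw [sum_filter, sum_pi_fin_succ_eq_sum_snoc, Fintype.sum_unique]
    simp only [Fin.snoc_last, Fintype.sum_ite_eq']
  | m + 1, hm => by
    obtain ⟨P, hP, hP0, hlast⟩ := exists_prefix_hasPairMarginals p hpos hcompat m (by omega)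
    obtain ⟨Q, hQ, hQ0, -⟩ := hP.exists_snoc hP0 (hpos m (by omega)) hlast
    exact ⟨Q, hQ, hQ0, fun b => (hQ.sum_filter_eq m (by omega) b).trans (hcompat m hm b)⟩

end Chain

/-- The classical marginal problem for an open chain: locally compatible
nearest-neighbour distributions `p_j` on `S_j × S_{j+1}` always admit a global
distribution `P` on `S_0 × ⋯ × S_{n-1}` with the prescribed two-site marginals. -/
theorem stmt4 {n : ℕ} (hn : 2 ≤ n) (S : ℕ → Type*)
    [∀ j, Fintype (S j)] [∀ j, DecidableEq (S j)]
    (p : ∀ j : ℕ, S j → S (j + 1) → ℝ)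
    (hpos : ∀ j, j + 1 < n → ∀ a b, 0 ≤ p j a b)
    (hsum : ∀ j, j + 1 < n → ∑ a, ∑ b, p j a b = 1)
    (hcompat : ∀ j, j + 2 < n → ∀ b : S (j + 1),
      ∑ a, p j a b = ∑ c, p (j + 1) b c) :
    ∃ P : (∀ i : Fin n, S i) → ℝ,
      (∀ f, 0 ≤ P f) ∧ (∑ f, P f = 1) ∧
      ∀ j, ∀ h : j + 1 < n, ∀ (a : S j) (b : S (j + 1)),
        ∑ f ∈ Finset.univ.filter
            (fun f : ∀ i : Fin n, S i => f ⟨j, by omega⟩ = a ∧ f ⟨j + 1, h⟩ = b), P f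
          = p j a b := by
  obtain ⟨m, rfl⟩ : ∃ m, n = m + 2 := ⟨n - 2, by omega⟩
  obtain ⟨P, hP, hP0, hlast⟩ := exists_prefix_hasPairMarginals p hpos hcompat m (by omega)
  obtain ⟨Q, hQ, hQ0, hQsum⟩ := hP.exists_snoc hP0 (hpos m (by omega)) hlast
  refine ⟨Q, hQ0, ?_, hQ⟩
  rw [hQsum, ← sum_fiberwise univ (fun f => f (Fin.last m)) P]
  simp only [hlast]
  exact hsum m (by omega)
end

section
/- Let n ≥ 2, let S_1, …, S_n be nonempty finite sets, and for each j ∈ {2, …, n} let p_j be a probability distribution on S_1 × S_j. Suppose all the p_j have the same marginal on the first coordinate, i.e., for all j, k ∈ {2, …, n} and all s ∈ S_1, ∑_{t∈S_j} p_j(s,t) = ∑_{t∈S_k} p_k(s,t). Then there exists a probability distribution P on S_1 × S_2 × ⋯ × S_n such that for every j ∈ {2, …, n} the marginal of P on the coordinates (1, j) equals p_j. -/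
/-! Make the leaves conditionally independent given the centre: with `μ` the common marginal
of the `p_j` on `S_0`, put `P f = μ (f 0) * ∏_{i ≠ 0} p_i (f 0) (f i) / μ (f 0)`. On a fibre
`{f 0 = a, f j = b}` the sum factorises into `μ a * (p_j a b / μ a)` times the row sums
`∑_x p_i a x / μ a = 1`. Where `μ a = 0` the division is junk, but then nonnegativity forces
`p_j a b = 0` as well. The total mass is the total mass of any one marginal. -/

open Finset Function

theorem Fintype.sum_eq_sum_sum_filter_and {α β γ M : Type*} [Fintype α] [Fintype β]
    [Fintype γ] [DecidableEq β] [DecidableEq γ] [AddCommMonoid M] (u : α → β) (v : α → γ)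
    (F : α → M) :
    ∑ x, F x = ∑ b, ∑ c, ∑ x ∈ univ.filter (fun x => u x = b ∧ v x = c), F x := by
  rw [← Finset.sum_fiberwise univ (fun x => (u x, v x)) F, Fintype.sum_prod_type]
  simp only [Prod.ext_iff]

section Star

variable {ι : Type*} [Fintype ι] [DecidableEq ι] {T : ι → Type*} {R : Type*} {c j : ι}

def starJoint [CommSemiring R] (c : ι) (μ : T c → R) (κ : ∀ i, T c → T i → R)
    (f : ∀ i, T i) : R :=
  μ (f c) * ∏ i ∈ univ.erase c, κ i (f c) (f i)

theorem starJoint_nonneg [CommSemiring R] [PartialOrder R] [IsOrderedRing R]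
    {μ : T c → R} {κ : ∀ i, T c → T i → R} (hμ : ∀ a, 0 ≤ μ a)
    (hκ : ∀ i ≠ c, ∀ a x, 0 ≤ κ i a x) (f : ∀ i, T i) : 0 ≤ starJoint c μ κ f :=
  mul_nonneg (hμ _) (prod_nonneg fun i hi => hκ i (ne_of_mem_erase hi) _ _)

variable [∀ i, Fintype (T i)] [∀ i, DecidableEq (T i)]

theorem sum_filter_apply_eq_and_apply_eq_prod [CommSemiring R] (hj : j ≠ c)
    (g : ∀ i, T i → R) (a : T c) (b : T j) :
    ∑ f ∈ univ.filter (fun f : ∀ i, T i => f c = a ∧ f j = b), ∏ i, g i (f i)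
      = g c a * g j b * ∏ i ∈ (univ.erase c).erase j, ∑ x, g i x := by
  have hbox : univ.filter (fun f : ∀ i, T i => f c = a ∧ f j = b)
      = Fintype.piFinset (update (update (fun i => (univ : Finset (T i))) c {a}) j {b}) := by
    ext f
    simp only [mem_filter, mem_univ, true_and, Fintype.mem_piFinset]
    constructor
    · rintro ⟨rfl, rfl⟩ i
      by_cases hij : i = j
      · subst hij; simp
      by_cases hic : i = c
      · subst hic; simp [update_of_ne hij]
      · simp [update_of_ne hij, update_of_ne hic]
    · intro h
      exact ⟨by simpa [update_of_ne hj.symm] using h c, by simpa using h j⟩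
  rw [hbox, ← prod_univ_sum, ← mul_prod_erase univ _ (mem_univ c),
    ← mul_prod_erase _ _ (mem_erase.2 ⟨hj, mem_univ j⟩), ← mul_assoc]
  simp only [update_self, update_of_ne hj.symm, sum_singleton]
  congr 1
  refine prod_congr rfl fun i hi => ?_
  rw [update_of_ne (ne_of_mem_erase hi), update_of_ne (ne_of_mem_erase (mem_of_mem_erase hi))]

theorem sum_filter_starJoint [CommSemiring R] (hj : j ≠ c) (μ : T c → R)
    (κ : ∀ i, T c → T i → R) (a : T c) (b : T j) :
    ∑ f ∈ univ.filter (fun f : ∀ i, T i => f c = a ∧ f j = b), starJoint c μ κ f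
      = μ a * κ j a b * ∏ i ∈ (univ.erase c).erase j, ∑ x, κ i a x := by
  let g : ∀ i, T i → R := fun i x => if i = c then μ a else κ i a x
  calc _ = ∑ f ∈ univ.filter (fun f : ∀ i, T i => f c = a ∧ f j = b), ∏ i, g i (f i) := by
        refine sum_congr rfl fun f hf => ?_
        rw [starJoint, (mem_filter.1 hf).2.1, ← mul_prod_erase univ _ (mem_univ c)]
        simp only [g, if_pos rfl]
        exact congrArg _ (prod_congr rfl fun i hi => (if_neg (ne_of_mem_erase hi)).symm)
    _ = _ := by
        rw [sum_filter_apply_eq_and_apply_eq_prod hj]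
        simp only [g, if_pos rfl, if_neg hj]
        exact congrArg _ (prod_congr rfl fun i hi =>
          sum_congr rfl fun x _ => if_neg (ne_of_mem_erase (mem_of_mem_erase hi)))

theorem sum_filter_starJoint_div [Field R] [LinearOrder R] [IsStrictOrderedRing R]
    {p : ∀ i, T c → T i → R} {μ : T c → R} (hp : ∀ i ≠ c, ∀ a x, 0 ≤ p i a x)
    (hμ : ∀ i ≠ c, ∀ a, ∑ x, p i a x = μ a) (hj : j ≠ c) (a : T c) (b : T j) :
    ∑ f ∈ univ.filter (fun f : ∀ i, T i => f c = a ∧ f j = b),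
        starJoint c μ (fun i a x => p i a x / μ a) f = p j a b := by
  rw [sum_filter_starJoint hj]
  by_cases ha : μ a = 0
  · rw [ha, zero_mul, zero_mul]
    exact ((sum_eq_zero_iff_of_nonneg fun x _ => hp j hj a x).1 ((hμ j hj a).trans ha) b
      (mem_univ b)).symm
  · rw [prod_eq_one fun i hi => by
      rw [← sum_div, hμ i (ne_of_mem_erase (mem_of_mem_erase hi)) a, div_self ha],
      mul_one, mul_div_cancel₀ _ ha]

end Star

/-- The classical marginal problem for a star configuration: distributions `p_j` on
`S_0 × S_j` (site `0` is the centre, sites `1,…,n-1` the leaves) sharing the same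
marginal on the centre always admit a global distribution `P` with the prescribed
two-site marginals. -/
theorem stmt5 {n : ℕ} (hn : 2 ≤ n) (S : ℕ → Type*)
    [∀ j, Fintype (S j)] [∀ j, DecidableEq (S j)]
    (p : ∀ j : ℕ, S 0 → S j → ℝ)
    (hpos : ∀ j, 1 ≤ j → j < n → ∀ a b, 0 ≤ p j a b)
    (hsum : ∀ j, 1 ≤ j → j < n → ∑ a, ∑ b, p j a b = 1)
    (hcompat : ∀ j k, 1 ≤ j → j < n → 1 ≤ k → k < n → ∀ s : S 0,
      ∑ t, p j s t = ∑ t, p k s t) :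
    ∃ P : (∀ i : Fin n, S i) → ℝ,
      (∀ f, 0 ≤ P f) ∧ (∑ f, P f = 1) ∧
      ∀ j, ∀ _ : 1 ≤ j, ∀ h2 : j < n, ∀ (a : S 0) (b : S j),
        ∑ f ∈ Finset.univ.filter
            (fun f : ∀ i : Fin n, S i => f ⟨0, by omega⟩ = a ∧ f ⟨j, h2⟩ = b), P f
          = p j a b := by
  set c : Fin n := ⟨0, by omega⟩
  have hleaf : ∀ i : Fin n, i ≠ c → 1 ≤ (i : ℕ) := fun i hi =>
    Nat.one_le_iff_ne_zero.2 fun h => hi (Fin.ext h)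
  set μ : S 0 → ℝ := fun a => ∑ t, p 1 a t
  have hp : ∀ i : Fin n, i ≠ c → ∀ a b, 0 ≤ p i a b := fun i hi =>
    hpos i (hleaf i hi) i.isLt
  have hμ_nonneg : ∀ a, 0 ≤ μ a := fun a =>
    sum_nonneg fun t _ => hpos 1 le_rfl (by omega) a t
  have hμ : ∀ i : Fin n, i ≠ c → ∀ a, ∑ t, p i a t = μ a := fun i hi =>
    hcompat i 1 (hleaf i hi) i.isLt le_rfl (by omega)
  have hmarg := fun j (hj : j ≠ c) =>
    sum_filter_starJoint_div (T := fun i : Fin n => S i) (p := fun i => p i) hp hμ hj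
  refine ⟨starJoint c μ (fun i a x => p i a x / μ a),
    starJoint_nonneg hμ_nonneg fun i hi a x => div_nonneg (hp i hi a x) (hμ_nonneg a),
    ?_, fun j _ hj => hmarg ⟨j, hj⟩ (Fin.ne_of_val_ne (show j ≠ 0 by omega))⟩
  let leaf : Fin n := ⟨1, by omega⟩
  rw [Fintype.sum_eq_sum_sum_filter_and (· c) (· leaf)]
  simp only [hmarg leaf (Fin.ne_of_val_ne one_ne_zero)]
  exact hsum 1 le_rfl (by omega)
end

section
/- Let S be a nonempty finite set and let p be a probability distribution on S × S that is exchangeable: p(a,b) = p(b,a) for all a, b ∈ S. Then there exists a probability measure μ on S^ℤ (with the product σ-algebra) that is invariant under the shift (x_n)_{n∈ℤ} ↦ (x_{n+1})_{n∈ℤ} and under the reflection (x_n)_{n∈ℤ} ↦ (x_{−n})_{n∈ℤ}, such that the pushforward of μ under x ↦ (x_0, x_1) equals p. -/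
/-!
Draw a pair `(a, b)` from `p` and extend it to the 2-periodic configuration `… a b a b …`,
with `a` on the even sites. The reflection `n ↦ -n` fixes every such configuration, while the
shift turns the one built from `(a, b)` into the one built from `(b, a)`; so the law of the
configuration is shift invariant exactly because `p` is exchangeable.
-/

open MeasureTheory

def alternating {α : Type*} (s : α × α) (n : ℤ) : α :=
  if Even n then s.1 else s.2

section Alternating

variable {α : Type*}

theorem alternating_add_one (s : α × α) (n : ℤ) :
    alternating s (n + 1) = alternating s.swap n := by
  by_cases h : Even n <;> simp [alternating, h]

theorem alternating_neg (s : α × α) (n : ℤ) : alternating s (-n) = alternating s n := by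
  simp [alternating]

theorem alternating_zero_one (s : α × α) : (alternating s 0, alternating s 1) = s := by
  simp [alternating]

variable [MeasurableSpace α]

theorem measurable_alternating : Measurable (alternating : α × α → ℤ → α) := by
  refine measurable_pi_lambda _ fun n => ?_
  by_cases h : Even n
  · simpa [alternating, h] using measurable_fst
  · simpa [alternating, h] using measurable_snd

variable (ν : Measure (α × α))

theorem map_shift_map_alternating (hν : ν.map Prod.swap = ν) :
    (ν.map alternating).map (fun x n => x (n + 1)) = ν.map alternating := by
  have hshift : Measurable fun (x : ℤ → α) n => x (n + 1) :=
    measurable_pi_lambda _ fun n => measurable_pi_apply _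
  have hcomm : (fun (x : ℤ → α) n => x (n + 1)) ∘ alternating = alternating ∘ Prod.swap := by
    funext s n
    exact alternating_add_one s n
  rw [Measure.map_map hshift measurable_alternating, hcomm,
    ← Measure.map_map measurable_alternating measurable_swap, hν]

theorem map_reflect_map_alternating :
    (ν.map alternating).map (fun x n => x (-n)) = ν.map alternating := by
  have hreflect : Measurable fun (x : ℤ → α) n => x (-n) :=
    measurable_pi_lambda _ fun n => measurable_pi_apply _
  have hfix : (fun (x : ℤ → α) n => x (-n)) ∘ alternating = alternating := by
    funext s n
    exact alternating_neg s n
  rw [Measure.map_map hreflect measurable_alternating, hfix]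

theorem map_eval_zero_one_map_alternating :
    (ν.map alternating).map (fun x => (x 0, x 1)) = ν := by
  have heval : Measurable fun x : ℤ → α => (x 0, x 1) :=
    (measurable_pi_apply 0).prodMk (measurable_pi_apply 1)
  have hid : (fun x : ℤ → α => (x 0, x 1)) ∘ alternating = id := by
    funext s
    exact alternating_zero_one s
  rw [Measure.map_map heval measurable_alternating, hid, Measure.map_id]

end Alternating

theorem PMF.toMeasure_map_swap {α : Type*} [Countable α] [MeasurableSpace α]
    [MeasurableSingletonClass α] (q : PMF (α × α)) (hq : ∀ a b, q (a, b) = q (b, a)) :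
    q.toMeasure.map Prod.swap = q.toMeasure := by
  refine Measure.ext_of_singleton fun s => ?_
  rw [Measure.map_apply measurable_swap (measurableSet_singleton s),
    ← Set.image_swap_eq_preimage_swap, Set.image_singleton,
    q.toMeasure_apply_singleton _ (measurableSet_singleton _),
    q.toMeasure_apply_singleton _ (measurableSet_singleton _)]
  exact hq s.2 s.1

theorem stmt8_general {S : Type*} [Fintype S]
    [MeasurableSpace S] [DiscreteMeasurableSpace S]
    (p : S × S → ℝ)
    (hpos : ∀ a b, 0 ≤ p (a, b)) (hsum : ∑ a, ∑ b, p (a, b) = 1)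
    (hsym : ∀ a b, p (a, b) = p (b, a)) :
    ∃ μ : Measure (ℤ → S), IsProbabilityMeasure μ ∧
      μ.map (fun x n => x (n + 1)) = μ ∧
      μ.map (fun x n => x (-n)) = μ ∧
      ∀ a b : S, μ.map (fun x => (x 0, x 1)) {(a, b)} = ENNReal.ofReal (p (a, b)) := by
  have htot : ∑ s : S × S, ENNReal.ofReal (p s) = 1 := by
    rw [← ENNReal.ofReal_sum_of_nonneg fun s _ => hpos s.1 s.2, Fintype.sum_prod_type, hsum,
      ENNReal.ofReal_one]
  set q := PMF.ofFintype (fun s => ENNReal.ofReal (p s)) htot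
  have hq : q.toMeasure.map Prod.swap = q.toMeasure :=
    q.toMeasure_map_swap fun a b => congrArg ENNReal.ofReal (hsym a b)
  refine ⟨q.toMeasure.map alternating, Measure.isProbabilityMeasure_map
    measurable_alternating.aemeasurable, map_shift_map_alternating _ hq,
    map_reflect_map_alternating _, fun a b => ?_⟩
  rw [map_eval_zero_one_map_alternating, q.toMeasure_apply_singleton _ (measurableSet_singleton _)]
  rfl

/-- Any exchangeable nearest-neighbour distribution `p` on `S × S` is the marginal on two
consecutive sites of a probability measure on `S^ℤ` that is invariant both under the
shift and under the reflection of the chain. -/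
theorem stmt8 {S : Type*} [Fintype S] [Nonempty S]
    [MeasurableSpace S] [DiscreteMeasurableSpace S]
    (p : S × S → ℝ)
    (hpos : ∀ a b, 0 ≤ p (a, b)) (hsum : ∑ a, ∑ b, p (a, b) = 1)
    (hsym : ∀ a b, p (a, b) = p (b, a)) :
    ∃ μ : Measure (ℤ → S), IsProbabilityMeasure μ ∧
      μ.map (fun x n => x (n + 1)) = μ ∧
      μ.map (fun x n => x (-n)) = μ ∧
      ∀ a b : S, μ.map (fun x => (x 0, x 1)) {(a, b)} = ENNReal.ofReal (p (a, b)) :=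
  stmt8_general p hpos hsum hsym
end

section
/- Let S be a nonempty finite set and let p be a probability distribution on the configurations {1,2}×{1,2} → S of a 2×2 plaquette that is invariant under swapping the two rows and invariant under swapping the two columns. Then there exists a probability measure μ on S^(ℤ×ℤ) (with the product σ-algebra) that is invariant under all translations of ℤ², invariant under the horizontal reflection (x,y) ↦ (−x,y), and invariant under the vertical reflection (x,y) ↦ (x,−y), such that the pushforward of μ under restriction to any 2×2 plaquette {(x,y), (x+1,y), (x,y+1), (x+1,y+1)} equals p (after the obvious identification of index sets). -/
open MeasureTheory

/-- The transposition of `Fin 2` (swap of two rows or columns). -/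
def flip2 : Fin 2 → Fin 2 := fun i => ⟨1 - i.1, by omega⟩

/-!
The row and column swaps of a plaquette generate the translations of `(ℤ/2)²` acting on
plaquette configurations, so `p` is invariant under all of them. Draw `c` according to `p` and
extend it 2-periodically, `x (m, n) = c (m mod 2, n mod 2)`. A translation of `ℤ²` turns this
extension into the extension of a translated `c`, the reflections leave it unchanged, and its
restriction to any plaquette is a translate of `c`; invariance of `p` does the rest.
-/

section Periodization

variable {S : Type*}

-- The ring structure on `Fin 2` is a scoped instance; it is opened only where casts from `ℤ`
-- are needed, so that every other `+` on `Fin 2 × Fin 2` is the default one.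
open Fin.CommRing in
def parity : ℤ × ℤ →+ Fin 2 × Fin 2 :=
  (Int.castAddHom (Fin 2)).prodMap (Int.castAddHom (Fin 2))

open Fin.CommRing in
lemma parity_neg_fst (w : ℤ × ℤ) : parity (-w.1, w.2) = parity w := by
  ext <;> simp [parity, CharTwo.neg_eq]

open Fin.CommRing in
lemma parity_neg_snd (w : ℤ × ℤ) : parity (w.1, -w.2) = parity w := by
  ext <;> simp [parity, CharTwo.neg_eq]

open Fin.CommRing in
lemma parity_natCast_val (q : Fin 2 × Fin 2) : parity ((q.1 : ℤ), (q.2 : ℤ)) = q := by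
  simp [parity]

def shift {G : Type*} [Add G] (g : G) (c : G → S) : G → S := fun q => c (q + g)

lemma shift_zero {G : Type*} [AddZeroClass G] (c : G → S) : shift 0 c = c := by
  funext q; exact congrArg c (add_zero q)

lemma shift_add {G : Type*} [AddSemigroup G] (g h : G) (c : G → S) :
    shift (g + h) c = shift g (shift h c) := by
  funext q; exact congrArg c (add_assoc q g h).symm

lemma shift_involutive (g : Fin 2 × Fin 2) : Function.Involutive (shift (S := S) g) := by
  have hgg : g + g = 0 := by revert g; decide
  intro c
  rw [← shift_add, hgg, shift_zero]

lemma flip2_eq_add_one (i : Fin 2) : flip2 i = i + 1 := by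
  revert i; decide

lemma apply_shift_eq_of_flip2_invariant {β : Type*} {p : (Fin 2 × Fin 2 → S) → β}
    (hrow : ∀ c, p (fun q => c (q.1, flip2 q.2)) = p c)
    (hcol : ∀ c, p (fun q => c (flip2 q.1, q.2)) = p c)
    (g : Fin 2 × Fin 2) (c : Fin 2 × Fin 2 → S) : p (shift g c) = p c := by
  have hfst : ∀ (i : Fin 2) c, p (shift (i, 0) c) = p c := by
    refine Fin.forall_fin_two.2 ⟨fun c => by rw [Prod.mk_zero_zero, shift_zero], fun c => ?_⟩
    convert hcol c using 2
    funext q; rw [shift, flip2_eq_add_one]; congr 1; ext <;> simp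
  have hsnd : ∀ (j : Fin 2) c, p (shift (0, j) c) = p c := by
    refine Fin.forall_fin_two.2 ⟨fun c => by rw [Prod.mk_zero_zero, shift_zero], fun c => ?_⟩
    convert hrow c using 2
    funext q; rw [shift, flip2_eq_add_one]; congr 1; ext <;> simp
  obtain ⟨i, j⟩ := g
  rw [show ((i, j) : Fin 2 × Fin 2) = (i, 0) + (0, j) by simp, shift_add, hfst, hsnd]

def periodize (c : Fin 2 × Fin 2 → S) : ℤ × ℤ → S := c ∘ parity

lemma periodize_add (c : Fin 2 × Fin 2 → S) (w v : ℤ × ℤ) :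
    periodize c (w + v) = periodize (shift (parity v) c) w := by
  simp [periodize, shift]

lemma periodize_neg_fst (c : Fin 2 × Fin 2 → S) (w : ℤ × ℤ) :
    periodize c (-w.1, w.2) = periodize c w := by
  simp only [periodize, Function.comp_apply, parity_neg_fst]

lemma periodize_neg_snd (c : Fin 2 × Fin 2 → S) (w : ℤ × ℤ) :
    periodize c (w.1, -w.2) = periodize c w := by
  simp only [periodize, Function.comp_apply, parity_neg_snd]

lemma periodize_plaquette (c : Fin 2 × Fin 2 → S) (a b : ℤ) :
    (fun q : Fin 2 × Fin 2 => periodize c (a + (q.1.1 : ℤ), b + (q.2.1 : ℤ)))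
      = shift (parity (a, b)) c := by
  funext q
  rw [show ((a + (q.1.1 : ℤ), b + (q.2.1 : ℤ)) : ℤ × ℤ) = ((q.1 : ℤ), (q.2 : ℤ)) + (a, b) by
    simp [add_comm], periodize_add, periodize, Function.comp_apply, parity_natCast_val]

end Periodization

namespace MeasureTheory.Measure

variable {X Y : Type*} [MeasurableSpace X] [MeasurableSpace Y]

lemma map_equiv_eq_self_of_forall_singleton [Countable X] [DiscreteMeasurableSpace X]
    (μ : Measure X) (e : X ≃ X) (h : ∀ x, μ {e x} = μ {x}) : μ.map e = μ := by
  refine ext_iff_singleton.2 fun x => ?_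
  rw [map_apply .of_discrete (.of_discrete), ← e.symm_symm, ← Equiv.image_eq_preimage_symm,
    Set.image_singleton, ← h, Equiv.apply_symm_apply]

lemma map_map_eq_self_of_semiconj {ν : Measure X} {f : X → Y} {g : X → X} {T : Y → Y}
    (hf : Measurable f) (hg : Measurable g) (hT : Measurable T)
    (hfgT : Function.Semiconj f g T) (hν : ν.map g = ν) : (ν.map f).map T = ν.map f := by
  rw [map_map hT hf, ← hfgT.comp_eq, ← map_map hf hg, hν]

end MeasureTheory.Measure

theorem stmt9_general {S : Type*} [Fintype S]
    [MeasurableSpace S] [DiscreteMeasurableSpace S]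
    (p : (Fin 2 × Fin 2 → S) → ℝ)
    (hpos : ∀ c, 0 ≤ p c) (hsum : ∑ c, p c = 1)
    (hrow : ∀ c, p (fun q => c (q.1, flip2 q.2)) = p c)
    (hcol : ∀ c, p (fun q => c (flip2 q.1, q.2)) = p c) :
    ∃ μ : Measure (ℤ × ℤ → S), IsProbabilityMeasure μ ∧
      (∀ v : ℤ × ℤ, μ.map (fun x w => x (w + v)) = μ) ∧
      (μ.map (fun x w => x (-w.1, w.2)) = μ) ∧
      (μ.map (fun x w => x (w.1, -w.2)) = μ) ∧
      ∀ (a b : ℤ) (c : Fin 2 × Fin 2 → S),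
        μ.map (fun x (q : Fin 2 × Fin 2) => x (a + (q.1.1 : ℤ), b + (q.2.1 : ℤ))) {c}
          = ENNReal.ofReal (p c) := by
  have hp_sum : ∑ c, ENNReal.ofReal (p c) = 1 := by
    rw [← ENNReal.ofReal_sum_of_nonneg fun c _ => hpos c, hsum, ENNReal.ofReal_one]
  set ν := (PMF.ofFintype _ hp_sum).toMeasure
  have hν_singleton (c : Fin 2 × Fin 2 → S) : ν {c} = ENNReal.ofReal (p c) := by
    rw [PMF.toMeasure_apply_singleton _ _ (.of_discrete), PMF.ofFintype_apply]
  have hν_shift (g : Fin 2 × Fin 2) : ν.map (shift g) = ν :=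
    Measure.map_equiv_eq_self_of_forall_singleton ν
      (Function.Involutive.toPerm _ (shift_involutive g)) fun c => by
        rw [Function.Involutive.coe_toPerm, hν_singleton, hν_singleton,
          apply_shift_eq_of_flip2_invariant hrow hcol]
  have hper : Measurable (periodize (S := S)) := by unfold periodize; fun_prop
  refine ⟨ν.map periodize, Measure.isProbabilityMeasure_map hper.aemeasurable, fun v => ?_, ?_, ?_,
    fun a b c => ?_⟩
  · exact Measure.map_map_eq_self_of_semiconj hper .of_discrete (by fun_prop)
      (fun c => funext fun w => (periodize_add c w v).symm) (hν_shift _)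
  · exact Measure.map_map_eq_self_of_semiconj hper measurable_id (by fun_prop)
      (fun c => funext fun w => (periodize_neg_fst c w).symm) Measure.map_id
  · exact Measure.map_map_eq_self_of_semiconj hper measurable_id (by fun_prop)
      (fun c => funext fun w => (periodize_neg_snd c w).symm) Measure.map_id
  · have hrestrict : (fun (x : ℤ × ℤ → S) (q : Fin 2 × Fin 2) =>
        x (a + (q.1.1 : ℤ), b + (q.2.1 : ℤ))) ∘ periodize = shift (parity (a, b)) :=
      funext fun c => periodize_plaquette c a b
    rw [Measure.map_map (by fun_prop) hper, hrestrict, hν_shift, hν_singleton]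

/-- Any distribution `p` on the configurations of a 2×2 plaquette that is invariant under
swapping the two rows and under swapping the two columns is the plaquette marginal of a
probability measure on `S^(ℤ×ℤ)` invariant under all translations and under the
horizontal and vertical reflections of the square lattice. -/
theorem stmt9 {S : Type*} [Fintype S] [Nonempty S]
    [MeasurableSpace S] [DiscreteMeasurableSpace S]
    (p : (Fin 2 × Fin 2 → S) → ℝ)
    (hpos : ∀ c, 0 ≤ p c) (hsum : ∑ c, p c = 1)
    (hrow : ∀ c, p (fun q => c (q.1, flip2 q.2)) = p c)
    (hcol : ∀ c, p (fun q => c (flip2 q.1, q.2)) = p c) :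
    ∃ μ : Measure (ℤ × ℤ → S), IsProbabilityMeasure μ ∧
      (∀ v : ℤ × ℤ, μ.map (fun x w => x (w + v)) = μ) ∧
      (μ.map (fun x w => x (-w.1, w.2)) = μ) ∧
      (μ.map (fun x w => x (w.1, -w.2)) = μ) ∧
      ∀ (a b : ℤ) (c : Fin 2 × Fin 2 → S),
        μ.map (fun x (q : Fin 2 × Fin 2) => x (a + (q.1.1 : ℤ), b + (q.2.1 : ℤ))) {c}
          = ENNReal.ofReal (p c) :=
  stmt9_general p hpos hsum hrow hcol
end
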